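/- With T₁ as in the key equation, i.e. T₁ = ((1-u^{-1}p)(1-up)/(-p)) · ∏_{m≥1} (1-q^m)^{-8} · ∏_{m odd} 1/( (1-u^{-2}q^m)(1-u^2 q^m)(1-up q^m)(1-u p^{-1} q^m)(1-u^{-1}p q^m)(1-u^{-1}p^{-1} q^m)(1-q^m)^2 ), and with T₂' = ( u^{-1}(1-2u+u²) + u^{-3}(1 + 10u² + 22u³ + 10u⁴ + u⁶) ) · ∏_{m≥1} (1-u^2 q^{2m})(1-u^{-2}q^{2m})(1-q^{2m})^2 / ( (1-up q^{2m})(1-u^{-1}p^{-1}q^{2m})(1-u^{-1}p q^{2m})(1-u p^{-1} q^{2m}) ) truncated appropriately, the coefficient of q^1 in T₁ - T₂' equals -(p² + p^{-2})(u + u^{-1}) - 8(p + p^{-1}) - (u + u^{-1}) + 22. -/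

import Mathlib

open PowerSeries

/-- The ring `ℚ[u^{±1}, p^{±1}]` of Laurent polynomials in `u` and `p`,
realized as the monoid algebra of `ℤ × ℤ` over `ℚ`. -/
noncomputable abbrev R : Type := AddMonoidAlgebra ℚ (ℤ × ℤ)

/-- The monomial `u^a p^b` in `ℚ[u^{±1}, p^{±1}]`. -/
noncomputable def mon (a b : ℤ) : R := AddMonoidAlgebra.single (a, b) (1 : ℚ)

/-- Inverse of a power series over `R` with constant coefficient `1`. -/
noncomputable def inv1 (f : PowerSeries R) : PowerSeries R := PowerSeries.invOfUnit f 1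

/-- Infinite product `∏_{m ≥ 1} F m`, `F m = 1 + O(q^m)`, defined coefficientwise. -/
noncomputable def iprodR (F : ℕ → PowerSeries R) : PowerSeries R :=
  PowerSeries.mk fun n => PowerSeries.coeff n (∏ m ∈ Finset.Icc 1 n, F m)

/-- The first term `T₁` of the key equation:
`((1-u⁻¹p)(1-up)/(-p)) ∏_{m≥1} (1-q^m)^{-8}`
`· ∏_{m odd} 1/((1-u⁻²qᵐ)(1-u²qᵐ)(1-up qᵐ)(1-up⁻¹qᵐ)(1-u⁻¹p qᵐ)(1-u⁻¹p⁻¹qᵐ)(1-qᵐ)²)`. -/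
noncomputable def T₁ : PowerSeries R :=
  PowerSeries.C ((1 - mon (-1) 1) * (1 - mon 1 1) * (-(mon 0 (-1))))
    * iprodR (fun m =>
        (inv1 (1 - (X : PowerSeries R) ^ m)) ^ 8
          * (if Odd m then
              inv1 (1 - PowerSeries.C (mon (-2) 0) * (X : PowerSeries R) ^ m)
                * inv1 (1 - PowerSeries.C (mon 2 0) * (X : PowerSeries R) ^ m)
                * inv1 (1 - PowerSeries.C (mon 1 1) * (X : PowerSeries R) ^ m)
                * inv1 (1 - PowerSeries.C (mon 1 (-1)) * (X : PowerSeries R) ^ m)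
                * inv1 (1 - PowerSeries.C (mon (-1) 1) * (X : PowerSeries R) ^ m)
                * inv1 (1 - PowerSeries.C (mon (-1) (-1)) * (X : PowerSeries R) ^ m)
                * (inv1 (1 - (X : PowerSeries R) ^ m)) ^ 2
            else 1))

/-- The product `∏_{m≥1} (1-u²q^{2m})(1-u⁻²q^{2m})(1-q^{2m})²
/ ((1-up q^{2m})(1-u⁻¹p⁻¹q^{2m})(1-u⁻¹p q^{2m})(1-up⁻¹ q^{2m}))` of the second term. -/
noncomputable def Pi2 : PowerSeries R :=
  iprodR (fun m =>
    (1 - PowerSeries.C (mon 2 0) * (X : PowerSeries R) ^ (2 * m))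
      * (1 - PowerSeries.C (mon (-2) 0) * (X : PowerSeries R) ^ (2 * m))
      * (1 - (X : PowerSeries R) ^ (2 * m)) ^ 2
      * inv1 (1 - PowerSeries.C (mon 1 1) * (X : PowerSeries R) ^ (2 * m))
      * inv1 (1 - PowerSeries.C (mon (-1) (-1)) * (X : PowerSeries R) ^ (2 * m))
      * inv1 (1 - PowerSeries.C (mon (-1) 1) * (X : PowerSeries R) ^ (2 * m))
      * inv1 (1 - PowerSeries.C (mon 1 (-1)) * (X : PowerSeries R) ^ (2 * m)))

/-- The truncated second term `T₂' = (u⁻¹(1-2u+u²) + q·u⁻³(1+10u²-22u³+10u⁴+u⁶)) · Pi2`,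
where `u⁻³(1+10u²-22u³+10u⁴+u⁶) = u⁻³ ∑_i (-u)^i b_{i,1}` encodes the Betti numbers
`(1,0,10,22,10,0,1)` of the moduli space `M_β` for `β² = 2`. -/
noncomputable def T₂' : PowerSeries R :=
  (PowerSeries.C (mon (-1) 0 * (1 - 2 * mon 1 0 + mon 2 0))
      + PowerSeries.C (mon (-3) 0
          * (1 + 10 * mon 2 0 - 22 * mon 3 0 + 10 * mon 4 0 + mon 6 0)) * X)
    * Pi2

/-! Every factor of the products in `T₁` and `Pi2` has constant coefficient `1`, so the
`q¹`-coefficient is additive over the factors and changes sign under inversion, and only the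
`m = 1` factor of an infinite product reaches `q¹`. As `Pi2` involves only even powers of `q`,
`T₂'` contributes just `u⁻³ ∑ (-u)^i b_{i,1}` at `q¹`. What remains is an identity of Laurent
polynomials. -/

namespace PowerSeries

variable {A : Type*} [CommRing A]

theorem coeff_one_invOfUnit (φ : A⟦X⟧) (u : Aˣ) :
    coeff 1 (invOfUnit φ u) = -(coeff 1 φ * ↑u⁻¹ ^ 2) := by
  rw [coeff_invOfUnit, if_neg one_ne_zero, Finset.Nat.antidiagonal_succ]
  simp
  ring

end PowerSeries

theorem constantCoeff_iprodR (F : ℕ → PowerSeries R) : constantCoeff (iprodR F) = 1 := by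
  rw [← coeff_zero_eq_constantCoeff_apply, iprodR, coeff_mk, Finset.Icc_eq_empty (by norm_num),
    Finset.prod_empty, coeff_zero_one]

theorem coeff_one_iprodR (F : ℕ → PowerSeries R) : coeff 1 (iprodR F) = coeff 1 (F 1) := by
  rw [iprodR, coeff_mk, Finset.Icc_self, Finset.prod_singleton]

theorem coeff_one_T₁ : coeff 1 T₁
    = (1 - mon (-1) 1) * (1 - mon 1 1) * -mon 0 (-1) *
      (10 + (mon (-2) 0 + mon 2 0 + mon 1 1 + mon 1 (-1) + mon (-1) 1 + mon (-1) (-1))) := by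
  simp [T₁, inv1, coeff_one_iprodR, coeff_one_mul, coeff_one_pow, coeff_one_invOfUnit]
  ring

theorem coeff_one_Pi2 : coeff 1 Pi2 = 0 := by
  simp [Pi2, inv1, coeff_one_iprodR, coeff_one_mul, coeff_one_pow, coeff_one_invOfUnit, coeff_X_pow]

theorem coeff_one_T₂' : coeff 1 T₂'
    = mon (-3) 0 * (1 + 10 * mon 2 0 - 22 * mon 3 0 + 10 * mon 4 0 + mon 6 0) := by
  rw [T₂', coeff_one_mul, coeff_one_Pi2, Pi2, constantCoeff_iprodR]
  simp

theorem mon_mul_mon (a b c d : ℤ) : mon a b * mon c d = mon (a + c) (b + d) := by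
  simp [mon, AddMonoidAlgebra.single_mul_single]

theorem mon_zero_zero : mon 0 0 = 1 := rfl

/-- The coefficient of `q^1` in `T₁ - T₂'` equals
`-(p² + p⁻²)(u + u⁻¹) - 8(p + p⁻¹) - (u + u⁻¹) + 22`. -/
theorem statement11 :
    PowerSeries.coeff 1 (T₁ - T₂')
      = -((mon 0 2 + mon 0 (-2)) * (mon 1 0 + mon (-1) 0))
          - 8 * (mon 0 1 + mon 0 (-1)) - (mon 1 0 + mon (-1) 0) + 22 := by
  rw [map_sub, coeff_one_T₁, coeff_one_T₂']
  simp only [mul_add, add_mul, mul_sub, sub_mul, mul_neg, neg_mul, mul_one, one_mul, mon_mul_mon,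
    mul_left_comm (mon _ _) (OfNat.ofNat _ : R)]
  norm_num only [mon_zero_zero]
  ring
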